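/- In the AC-ACG setting, for every k ≥ 0 with C_k > 0.9·M_k (a bad iteration) and every u ∈ s: 0 ≤ η_k(u) − η_{k+1}(u) + (m/2)·a_k·D² + ((1 − γ)/(2·γ))·D², where η_j(u) := A_j·(φ(y_j) − φ(u)) + (1/2)·‖u − x_j‖². -/

import Mathlib

/-!
At a bad iteration `y (k+1) = (A k • y k + a k • x (k+1)) / A (k+1)`, so that
`y (k+1) - xt k = (a k / A (k+1)) • (x (k+1) - x k)`. Three estimates are added up.
The prox step makes `x (k+1)` the minimiser of a `1`-strongly convex function, which gives the
three-point inequality. The descent lemma for the `Mbar`-Lipschitz gradient at `y (k+1)`, with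
`A (k+1) * (a k / A (k+1)) ^ 2 = 1 / Mseq k ≤ 1 / (γ * Mbar)`, costs
`‖x (k+1) - x k‖ ^ 2 / (2 γ)`: half of it is absorbed by the three-point inequality, the rest is
at most `(1 - γ) / (2 γ) * D ^ 2`. The lower curvature bound at `y k` and `u`, weighted by `A k`
and `a k`, costs `m / 2 * a k * D ^ 2`, because
`A k * ‖y k - xt k‖ ^ 2 + a k * ‖u - xt k‖ ^ 2 ≤ a k * D ^ 2`.
-/

open Set Filter Topology
open scoped RealInnerProductSpace

section ConvexAnalysis

variable {E : Type*} [NormedAddCommGroup E] [InnerProductSpace ℝ E]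

/-- `ℓ_f(w; z)` of the paper, `f' z` being the gradient of `f` at `z`. -/
def linearization (f : E → ℝ) (f' : E → E) (z w : E) : ℝ := f z + ⟪f' z, w - z⟫

theorem convexOn_linearization {s : Set E} (hs : Convex ℝ s) (f : E → ℝ) (f' : E → E) (z : E) :
    ConvexOn ℝ s (linearization f f' z) := by
  refine (((innerSL ℝ (f' z)).toLinearMap.convexOn hs).add_const (f z - ⟪f' z, z⟫)).congr
    fun w _ => ?_
  simp [linearization, inner_sub_right]
  ring

theorem norm_sub_smul_add_smul_sq {a b : ℝ} (hab : a + b = 1) (p q u : E) :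
    ‖u - (a • p + b • q)‖ ^ 2 = a * ‖u - p‖ ^ 2 + b * ‖u - q‖ ^ 2 - a * b * ‖p - q‖ ^ 2 := by
  obtain rfl := eq_sub_of_add_eq' hab
  have hu : u - (a • p + (1 - a) • q) = a • (u - p) + (1 - a) • (u - q) := by module
  have hpq : p - q = (u - q) - (u - p) := by abel
  rw [hu, hpq]
  generalize u - p = X
  generalize u - q = Y
  rw [norm_add_sq_real, norm_sub_sq_real, norm_smul, norm_smul, real_inner_smul_left,
    real_inner_smul_right, real_inner_comm X]
  simp only [Real.norm_eq_abs, mul_pow, sq_abs]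
  ring

theorem weighted_sq_dist_smul_add_smul_le {a b D : ℝ} (ha : 0 ≤ a) (hb : 0 ≤ b) (hab : a + b = 1)
    {p q u : E} (hup : ‖u - p‖ ≤ D) (huq : ‖u - q‖ ≤ D) :
    a * ‖p - (a • p + b • q)‖ ^ 2 + b * ‖u - (a • p + b • q)‖ ^ 2 ≤ b * D ^ 2 := by
  have hp : ‖p - (a • p + b • q)‖ ^ 2 = b ^ 2 * ‖p - q‖ ^ 2 := by
    rw [norm_sub_smul_add_smul_sq hab, sub_self, norm_zero]
    linear_combination (-(b * ‖p - q‖ ^ 2)) * hab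
  have hup2 : ‖u - p‖ ^ 2 ≤ D ^ 2 := pow_le_pow_left₀ (norm_nonneg _) hup 2
  have huq2 : ‖u - q‖ ^ 2 ≤ D ^ 2 := pow_le_pow_left₀ (norm_nonneg _) huq 2
  calc a * ‖p - (a • p + b • q)‖ ^ 2 + b * ‖u - (a • p + b • q)‖ ^ 2
      = b * (a * ‖u - p‖ ^ 2 + b * ‖u - q‖ ^ 2) := by
        rw [hp, norm_sub_smul_add_smul_sq hab]; ring
    _ ≤ b * (a * D ^ 2 + b * D ^ 2) := by gcongr
    _ = b * D ^ 2 := by rw [← add_mul, hab, one_mul]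

theorem ConvexOn.strongConvexOn_add_half_sq_norm_sub {s : Set E} {ψ : E → ℝ}
    (hψ : ConvexOn ℝ s ψ) (c : E) :
    StrongConvexOn s 1 (fun w => ψ w + 1 / 2 * ‖w - c‖ ^ 2) := by
  rw [strongConvexOn_iff_convex]
  refine (hψ.add (((-innerSL ℝ c).toLinearMap.convexOn hψ.1).add_const (1 / 2 * ‖c‖ ^ 2))).congr
    fun w _ => ?_
  simp [norm_sub_sq_real, real_inner_comm c w]
  ring

theorem StrongConvexOn.add_sq_le_of_isMinOn {s : Set E} {m : ℝ} {F : E → ℝ}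
    (hF : StrongConvexOn s m F) {p : E} (hp : p ∈ s) (hmin : IsMinOn F s p) {u : E} (hu : u ∈ s) :
    F p + m / 2 * ‖u - p‖ ^ 2 ≤ F u := by
  have hshrink : ∀ t ∈ Ioo (0 : ℝ) 1, (1 - t) * (m / 2 * ‖u - p‖ ^ 2) ≤ F u - F p := by
    rintro t ⟨ht0, ht1⟩
    have hcomb := hF.2 hu hp ht0.le (sub_nonneg.2 ht1.le) (add_sub_cancel t 1)
    have hminle :=
      isMinOn_iff.1 hmin _ (hF.1 hu hp ht0.le (sub_nonneg.2 ht1.le) (add_sub_cancel t 1))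
    simp only [smul_eq_mul] at hcomb
    refine le_of_mul_le_mul_left ?_ ht0
    linear_combination hminle + hcomb
  -- compare `p` with `t • u + (1 - t) • p` and let `t → 0⁺`
  have hlim : Tendsto (fun t : ℝ => (1 - t) * (m / 2 * ‖u - p‖ ^ 2)) (𝓝[>] 0)
      (𝓝 ((1 - 0) * (m / 2 * ‖u - p‖ ^ 2))) :=
    ((continuous_const.sub continuous_id).mul continuous_const).continuousWithinAt.tendsto
  have := le_of_tendsto hlim (eventually_of_mem (Ioo_mem_nhdsGT one_pos) hshrink)
  linarith

theorem le_linearization_add_sq_norm_sub {s : Set E} (hs : Convex ℝ s) {f : E → ℝ} {f' : E → E}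
    (hf : ∀ z ∈ s, HasFDerivAt f (innerSL ℝ (f' z)) z) {L : ℝ}
    (hL : ∀ u ∈ s, ∀ u' ∈ s, ‖f' u - f' u'‖ ≤ L * ‖u - u'‖) {x w : E} (hx : x ∈ s) (hw : w ∈ s) :
    f w ≤ linearization f f' x w + L / 2 * ‖w - x‖ ^ 2 := by
  set v := w - x
  set g : ℝ → ℝ := fun t => f (x + t • v) - t * ⟪f' x, v⟫ - L / 2 * ‖v‖ ^ 2 * t ^ 2
  have hg : ∀ t ∈ Icc (0 : ℝ) 1,
      HasDerivAt g (⟪f' (x + t • v) - f' x, v⟫ - L * ‖v‖ ^ 2 * t) t := by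
    intro t ht
    have hpath : HasDerivAt (fun t : ℝ => x + t • v) v t := by
      simpa using ((hasDerivAt_id t).smul_const v).const_add x
    have := (((hf _ (hs.add_smul_sub_mem hx hw ht)).comp_hasDerivAt t hpath).sub
      ((hasDerivAt_id t).mul_const ⟪f' x, v⟫)).sub
      ((hasDerivAt_pow 2 t).const_mul (L / 2 * ‖v‖ ^ 2))
    refine this.congr_deriv ?_
    simp only [innerSL_apply_apply, inner_sub_left, v]
    ring
  have hanti : AntitoneOn g (Icc 0 1) := by
    refine antitoneOn_of_deriv_nonpos (convex_Icc 0 1)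
      (fun t ht => (hg t ht).continuousAt.continuousWithinAt)
      (fun t ht => (hg t (interior_subset ht)).differentiableAt.differentiableWithinAt) ?_
    intro t ht
    rw [interior_Icc] at ht
    rw [(hg t (Ioo_subset_Icc_self ht)).deriv, sub_nonpos]
    calc ⟪f' (x + t • v) - f' x, v⟫ ≤ ‖f' (x + t • v) - f' x‖ * ‖v‖ := real_inner_le_norm _ _
      _ ≤ L * ‖x + t • v - x‖ * ‖v‖ :=
        mul_le_mul_of_nonneg_right (hL _ (hs.add_smul_sub_mem hx hw (Ioo_subset_Icc_self ht)) _ hx)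
          (norm_nonneg v)
      _ = L * ‖v‖ ^ 2 * t := by
        rw [add_sub_cancel_left, norm_smul, Real.norm_of_nonneg ht.1.le]; ring
  have hg01 := hanti (left_mem_Icc.2 zero_le_one) (right_mem_Icc.2 zero_le_one) zero_le_one
  simp only [g, one_smul, zero_smul, add_zero, add_sub_cancel, zero_mul, sub_zero, one_mul,
    one_pow, mul_one, v] at hg01
  rw [linearization]
  linarith

end ConvexAnalysis

section ACACG

variable {E : Type*} [NormedAddCommGroup E] [InnerProductSpace ℝ E]

/-- `η_j(u)` of the paper is `potential (f + h) (A j) (y j) (x j) u`. -/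
noncomputable def potential (φ : E → ℝ) (A : ℝ) (y x u : E) : ℝ :=
  A * (φ y - φ u) + 1 / 2 * ‖u - x‖ ^ 2

theorem quadratic_root_mul_sq_eq {M A a : ℝ} (hM : 0 < M) (hA : 0 ≤ A)
    (ha : a = (1 + √(1 + 4 * M * A)) / (2 * M)) : M * a ^ 2 = A + a := by
  have hroot : √(1 + 4 * M * A) ^ 2 = 1 + 4 * M * A := Real.sq_sqrt (by positivity)
  generalize √(1 + 4 * M * A) = S at ha hroot
  rw [ha]
  field_simp
  linear_combination hroot

theorem inv_add_smul_add_smul (A a : ℝ) (p q : E) :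
    (A + a)⁻¹ • (A • p + a • q) = (A / (A + a)) • p + (a / (A + a)) • q := by
  rw [smul_add, smul_smul, smul_smul, div_eq_inv_mul, div_eq_inv_mul]

theorem Convex.inv_add_smul_add_smul_mem {s : Set E} (hs : Convex ℝ s) {A a : ℝ} (hA : 0 ≤ A)
    (ha : 0 < a) {p q : E} (hp : p ∈ s) (hq : q ∈ s) : (A + a)⁻¹ • (A • p + a • q) ∈ s := by
  rw [inv_add_smul_add_smul]
  exact convex_iff_div.1 hs hp hq hA ha.le (by positivity)

variable {s : Set E} {f h : E → ℝ} {f' : E → E} {D m Mbar γ Mk A a : ℝ} {x y x' u xt y' : E}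

theorem weighted_linearization_le (hs : Convex ℝ s) (hdiam : ∀ u ∈ s, ∀ u' ∈ s, ‖u - u'‖ ≤ D)
    (hm : 0 ≤ m) (hlower : ∀ u ∈ s, ∀ u' ∈ s,
      -(m / 2) * ‖u - u'‖ ^ 2 ≤ f u - f u' - ⟪f' u', u - u'⟫)
    (hA : 0 ≤ A) (ha : 0 < a) (hx : x ∈ s) (hy : y ∈ s) (hu : u ∈ s)
    (hxt : xt = (A + a)⁻¹ • (A • y + a • x)) :
    A * linearization f f' xt y + a * linearization f f' xt u
      ≤ A * f y + a * f u + m / 2 * a * D ^ 2 := by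
  have hAa : 0 < A + a := by positivity
  have hxts : xt ∈ s := hxt ▸ hs.inv_add_smul_add_smul_mem hA ha hy hx
  have hly : linearization f f' xt y ≤ f y + m / 2 * ‖y - xt‖ ^ 2 := by
    have := hlower y hy xt hxts
    unfold linearization; linarith
  have hlu : linearization f f' xt u ≤ f u + m / 2 * ‖u - xt‖ ^ 2 := by
    have := hlower u hu xt hxts
    unfold linearization; linarith
  rw [inv_add_smul_add_smul] at hxt
  have hweights : A / (A + a) + a / (A + a) = 1 := by field_simp
  have hspread := weighted_sq_dist_smul_add_smul_le (by positivity) (by positivity) hweights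
    (hdiam u hu y hy) (hdiam u hu x hx)
  rw [← hxt] at hspread
  calc A * linearization f f' xt y + a * linearization f f' xt u
      ≤ A * (f y + m / 2 * ‖y - xt‖ ^ 2) + a * (f u + m / 2 * ‖u - xt‖ ^ 2) := by
        gcongr
    _ = A * f y + a * f u + m / 2 * (A + a)
          * (A / (A + a) * ‖y - xt‖ ^ 2 + a / (A + a) * ‖u - xt‖ ^ 2) := by
        field_simp; ring
    _ ≤ A * f y + a * f u + m / 2 * (A + a) * (a / (A + a) * D ^ 2) := by gcongr
    _ = A * f y + a * f u + m / 2 * a * D ^ 2 := by field_simp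

theorem mul_apply_le_of_extrapolation (hs : Convex ℝ s)
    (hf : ∀ z ∈ s, HasFDerivAt f (innerSL ℝ (f' z)) z)
    (hlip : ∀ u ∈ s, ∀ u' ∈ s, ‖f' u - f' u'‖ ≤ Mbar * ‖u - u'‖) (hh : ConvexOn ℝ s h)
    (hγ : 0 < γ) (hMk : γ * Mbar ≤ Mk) (hA : 0 ≤ A) (ha : 0 < a) (hMa : Mk * a ^ 2 = A + a)
    (hx : x ∈ s) (hy : y ∈ s) (hx' : x' ∈ s)
    (hxt : xt = (A + a)⁻¹ • (A • y + a • x)) (hy' : y' = (A + a)⁻¹ • (A • y + a • x')) :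
    (A + a) * (f y' + h y') ≤ A * (linearization f f' xt y + h y)
      + a * (linearization f f' xt x' + h x') + 1 / (2 * γ) * ‖x' - x‖ ^ 2 := by
  have hAa : 0 < A + a := by positivity
  have hMkpos : 0 < Mk := pos_of_mul_pos_left (hMa ▸ hAa) (sq_nonneg a)
  have hxts : xt ∈ s := hxt ▸ hs.inv_add_smul_add_smul_mem hA ha hy hx
  have hy's : y' ∈ s := hy' ▸ hs.inv_add_smul_add_smul_mem hA ha hy hx'
  have hdesc := le_linearization_add_sq_norm_sub hs hf hlip hxts hy's
  rw [inv_add_smul_add_smul] at hxt hy'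
  have hconv := ((convexOn_linearization hs f f' xt).add hh).2 hy hx'
    (by positivity : 0 ≤ A / (A + a)) (by positivity : 0 ≤ a / (A + a)) (by field_simp)
  rw [← hy'] at hconv
  simp only [Pi.add_apply, smul_eq_mul] at hconv
  have hgap : ‖y' - xt‖ ^ 2 = (a / (A + a)) ^ 2 * ‖x' - x‖ ^ 2 := by
    have hdiff : y' - xt = (a / (A + a)) • (x' - x) := by rw [hy', hxt]; module
    rw [hdiff, norm_smul, Real.norm_of_nonneg (by positivity), mul_pow]
  have hcoef : (A + a) * (Mbar / 2 * (a / (A + a)) ^ 2) ≤ 1 / (2 * γ) := by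
    have hsimp : (A + a) * (Mbar / 2 * (a / (A + a)) ^ 2) = Mbar / (2 * Mk) := by
      rw [← hMa]; field_simp
    rw [hsimp, div_le_div_iff₀ (by positivity) (by positivity)]
    linarith
  have hquad : (A + a) * (Mbar / 2 * ‖y' - xt‖ ^ 2) ≤ 1 / (2 * γ) * ‖x' - x‖ ^ 2 := by
    rw [hgap, ← mul_assoc, ← mul_assoc, mul_assoc (A + a)]
    gcongr
  calc (A + a) * (f y' + h y')
      ≤ (A + a) * (linearization f f' xt y' + h y') + (A + a) * (Mbar / 2 * ‖y' - xt‖ ^ 2) := by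
        linarith [mul_le_mul_of_nonneg_left hdesc hAa.le]
    _ ≤ (A + a) * (A / (A + a) * (linearization f f' xt y + h y)
          + a / (A + a) * (linearization f f' xt x' + h x')) + 1 / (2 * γ) * ‖x' - x‖ ^ 2 := by
        gcongr
    _ = _ := by field_simp

theorem potential_le_of_extrapolation_step (hs : Convex ℝ s)
    (hdiam : ∀ u ∈ s, ∀ u' ∈ s, ‖u - u'‖ ≤ D) (hf : ∀ z ∈ s, HasFDerivAt f (innerSL ℝ (f' z)) z)
    (hm : 0 ≤ m) (hlower : ∀ u ∈ s, ∀ u' ∈ s,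
      -(m / 2) * ‖u - u'‖ ^ 2 ≤ f u - f u' - ⟪f' u', u - u'⟫)
    (hlip : ∀ u ∈ s, ∀ u' ∈ s, ‖f' u - f' u'‖ ≤ Mbar * ‖u - u'‖) (hh : ConvexOn ℝ s h)
    (hγ : 0 < γ) (hγ1 : γ ≤ 1) (hMk : γ * Mbar ≤ Mk) (hA : 0 ≤ A) (ha : 0 < a)
    (hMa : Mk * a ^ 2 = A + a) (hx : x ∈ s) (hy : y ∈ s) (hu : u ∈ s)
    (hxt : xt = (A + a)⁻¹ • (A • y + a • x)) (hx' : x' ∈ s)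
    (hmin : IsMinOn (fun w => a * (linearization f f' xt w + h w) + 1 / 2 * ‖w - x‖ ^ 2) s x')
    (hy' : y' = (A + a)⁻¹ • (A • y + a • x')) :
    potential (f + h) (A + a) y' x' u
      ≤ potential (f + h) A y x u + m / 2 * a * D ^ 2 + (1 - γ) / (2 * γ) * D ^ 2 := by
  have hprox := ((((convexOn_linearization hs f f' xt).add hh).smul ha.le
    ).strongConvexOn_add_half_sq_norm_sub x).add_sq_le_of_isMinOn hx' hmin hu
  simp only [Pi.add_apply, smul_eq_mul] at hprox
  have hdesc := mul_apply_le_of_extrapolation hs hf hlip hh hγ hMk hA ha hMa hx hy hx' hxt hy'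
  have hcurv := weighted_linearization_le hs hdiam hm hlower hA ha hx hy hu hxt
  have hslack : (1 / (2 * γ) - 1 / 2) * ‖x' - x‖ ^ 2 ≤ (1 - γ) / (2 * γ) * D ^ 2 := by
    rw [show 1 / (2 * γ) - 1 / 2 = (1 - γ) / (2 * γ) by field_simp]
    have hD := pow_le_pow_left₀ (norm_nonneg _) (hdiam x' hx' x hx) 2
    gcongr
  simp only [potential, Pi.add_apply]
  linarith

end ACACG

theorem stmt12_general {E : Type*} [NormedAddCommGroup E] [InnerProductSpace ℝ E]
    (s : Set E) (hs : Convex ℝ s)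
    (D : ℝ) (hdiam : ∀ u ∈ s, ∀ u' ∈ s, ‖u - u'‖ ≤ D)
    (f : E → ℝ) (f' : E → E) (hf : ∀ z : E, HasFDerivAt f ((innerSL ℝ) (f' z)) z)
    (m Mbar : ℝ) (hm : 0 ≤ m) (hMbar : 0 < Mbar)
    (hlower : ∀ u ∈ s, ∀ u' ∈ s,
      -(m / 2) * ‖u - u'‖ ^ 2 ≤ f u - f u' - (inner ℝ (f' u') (u - u') : ℝ))
    (hlip : ∀ u ∈ s, ∀ u' ∈ s, ‖f' u - f' u'‖ ≤ Mbar * ‖u - u'‖)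
    (h : E → ℝ) (hh : ConvexOn ℝ s h)
    (γ M α : ℝ) (hγ0 : 0 < γ) (hγ1 : γ < 1) (hMM : Mbar ≤ M)
    (x y yg xt : ℕ → E) (A a Mseq C Cavg : ℕ → ℝ)
    (hx0 : x 0 ∈ s) (hy0 : y 0 = x 0) (hA0 : A 0 = 0) (hM0 : Mseq 0 = γ * M)
    (ha : ∀ k, a k = (1 + Real.sqrt (1 + 4 * Mseq k * A k)) / (2 * Mseq k))
    (hA : ∀ k, A (k + 1) = A k + a k)
    (hxt : ∀ k, xt k = (A (k + 1))⁻¹ • (A k • y k + a k • x k))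
    (hyg_mem : ∀ k, yg (k + 1) ∈ s)
    (hx_mem : ∀ k, x (k + 1) ∈ s)
    (hx_min : ∀ k, ∀ u ∈ s,
      a k * (f (xt k) + (inner ℝ (f' (xt k)) (x (k + 1) - xt k) : ℝ) + h (x (k + 1)))
          + 1 / 2 * ‖x (k + 1) - x k‖ ^ 2
        ≤ a k * (f (xt k) + (inner ℝ (f' (xt k)) (u - xt k) : ℝ) + h u)
          + 1 / 2 * ‖u - x k‖ ^ 2)
    (hMsucc : ∀ k, Mseq (k + 1) = max (Cavg k / α) (γ * M))
    (hy : ∀ k, y (k + 1) =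
      if 0.9 * Mseq k < C k then (A (k + 1))⁻¹ • (A k • y k + a k • x (k + 1))
      else yg (k + 1))
     :
    ∀ k : ℕ, 0.9 * Mseq k < C k → ∀ u ∈ s,
      0 ≤ (A k * ((f (y k) + h (y k)) - (f u + h u)) + 1 / 2 * ‖u - x k‖ ^ 2)
          - (A (k + 1) * ((f (y (k + 1)) + h (y (k + 1))) - (f u + h u))
              + 1 / 2 * ‖u - x (k + 1)‖ ^ 2)
          + m / 2 * a k * D ^ 2 + (1 - γ) / (2 * γ) * D ^ 2 := by
  intro k hbad u hu
  have hMseq : ∀ j, γ * Mbar ≤ Mseq j := by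
    rintro (_ | j)
    · rw [hM0]; gcongr
    · rw [hMsucc]; exact le_max_of_le_right (by gcongr)
  have hMseq_pos : ∀ j, 0 < Mseq j := fun j => (mul_pos hγ0 hMbar).trans_le (hMseq j)
  have ha_pos : ∀ j, 0 < a j := fun j => by
    rw [ha j]; exact div_pos (by positivity) (by linarith [hMseq_pos j])
  have hA_nonneg : ∀ j, 0 ≤ A j := by
    intro j
    induction j with
    | zero => exact hA0.ge
    | succ j ih => rw [hA j]; linarith [ha_pos j]
  have hmem : ∀ j, x j ∈ s ∧ y j ∈ s := by
    intro j
    induction j with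
    | zero => exact ⟨hx0, hy0 ▸ hx0⟩
    | succ j ih =>
      refine ⟨hx_mem j, ?_⟩
      rw [hy j, hA j]
      split_ifs
      · exact hs.inv_add_smul_add_smul_mem (hA_nonneg j) (ha_pos j) ih.2 (hx_mem j)
      · exact hyg_mem j
  have hstep := potential_le_of_extrapolation_step (y' := y (k + 1)) hs hdiam (fun z _ => hf z)
    hm hlower hlip hh hγ0 hγ1.le (hMseq k) (hA_nonneg k) (ha_pos k)
    (quadratic_root_mul_sq_eq (hMseq_pos k) (hA_nonneg k) (ha k)) (hmem k).1 (hmem k).2 hu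
    (by rw [hxt k, hA k]) (hx_mem k) (isMinOn_iff.2 (hx_min k)) (by rw [hy k, if_pos hbad, hA k])
  rw [← hA k] at hstep
  simp only [potential, Pi.add_apply] at hstep
  linarith

/-- Lemma 3(b): potential inequality at bad iterations. -/
theorem stmt12 {E : Type*} [NormedAddCommGroup E] [InnerProductSpace ℝ E]
    (s : Set E) (hs : Convex ℝ s) (hsne : s.Nonempty)
    (D : ℝ) (hD : 0 < D) (hdiam : ∀ u ∈ s, ∀ u' ∈ s, ‖u - u'‖ ≤ D)
    (f : E → ℝ) (f' : E → E) (hf : ∀ z : E, HasFDerivAt f ((innerSL ℝ) (f' z)) z)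
    (m Mbar : ℝ) (hm : 0 ≤ m) (hMbar : 0 < Mbar)
    (hlower : ∀ u ∈ s, ∀ u' ∈ s,
      -(m / 2) * ‖u - u'‖ ^ 2 ≤ f u - f u' - (inner ℝ (f' u') (u - u') : ℝ))
    (hlip : ∀ u ∈ s, ∀ u' ∈ s, ‖f' u - f' u'‖ ≤ Mbar * ‖u - u'‖)
    (h : E → ℝ) (hh : ConvexOn ℝ s h)
    (γ M α : ℝ) (hγ0 : 0 < γ) (hγ1 : γ < 1) (hMM : Mbar ≤ M)
    (hα : α = 0.9 / 8 * (1 + 1 / (0.9 * γ))⁻¹)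
    (x y yg xt v : ℕ → E) (A a Mseq C Cavg : ℕ → ℝ)
    (hx0 : x 0 ∈ s) (hy0 : y 0 = x 0) (hA0 : A 0 = 0) (hM0 : Mseq 0 = γ * M)
    (ha : ∀ k, a k = (1 + Real.sqrt (1 + 4 * Mseq k * A k)) / (2 * Mseq k))
    (hA : ∀ k, A (k + 1) = A k + a k)
    (hxt : ∀ k, xt k = (A (k + 1))⁻¹ • (A k • y k + a k • x k))
    (hyg_mem : ∀ k, yg (k + 1) ∈ s)
    (hyg_min : ∀ k, ∀ u ∈ s,
      f (xt k) + (inner ℝ (f' (xt k)) (yg (k + 1) - xt k) : ℝ) + h (yg (k + 1))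
          + Mseq k / 2 * ‖yg (k + 1) - xt k‖ ^ 2
        ≤ f (xt k) + (inner ℝ (f' (xt k)) (u - xt k) : ℝ) + h u
          + Mseq k / 2 * ‖u - xt k‖ ^ 2)
    (hx_mem : ∀ k, x (k + 1) ∈ s)
    (hx_min : ∀ k, ∀ u ∈ s,
      a k * (f (xt k) + (inner ℝ (f' (xt k)) (x (k + 1) - xt k) : ℝ) + h (x (k + 1)))
          + 1 / 2 * ‖x (k + 1) - x k‖ ^ 2
        ≤ a k * (f (xt k) + (inner ℝ (f' (xt k)) (u - xt k) : ℝ) + h u)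
          + 1 / 2 * ‖u - x k‖ ^ 2)
    (hv : ∀ k, v (k + 1) = Mseq k • (xt k - yg (k + 1)) + f' (yg (k + 1)) - f' (xt k))
    (hne : ∀ k, yg (k + 1) ≠ xt k)
    (hC : ∀ k, C k = max
      (2 * (f (yg (k + 1)) - (f (xt k) + (inner ℝ (f' (xt k)) (yg (k + 1) - xt k) : ℝ)))
        / ‖yg (k + 1) - xt k‖ ^ 2)
      (‖f' (yg (k + 1)) - f' (xt k)‖ / ‖yg (k + 1) - xt k‖))
    (hCavg : ∀ k, Cavg k = (1 / ((k : ℝ) + 1)) * ∑ j ∈ Finset.range (k + 1), C j)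
    (hMsucc : ∀ k, Mseq (k + 1) = max (Cavg k / α) (γ * M))
    (hy : ∀ k, y (k + 1) =
      if 0.9 * Mseq k < C k then (A (k + 1))⁻¹ • (A k • y k + a k • x (k + 1))
      else yg (k + 1))
     :
    ∀ k : ℕ, 0.9 * Mseq k < C k → ∀ u ∈ s,
      0 ≤ (A k * ((f (y k) + h (y k)) - (f u + h u)) + 1 / 2 * ‖u - x k‖ ^ 2)
          - (A (k + 1) * ((f (y (k + 1)) + h (y (k + 1))) - (f u + h u))
              + 1 / 2 * ‖u - x (k + 1)‖ ^ 2)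
          + m / 2 * a k * D ^ 2 + (1 - γ) / (2 * γ) * D ^ 2 :=
  stmt12_general s hs D hdiam f f' hf m Mbar hm hMbar hlower hlip h hh γ M α hγ0 hγ1 hMM x y yg xt A
    a Mseq C Cavg hx0 hy0 hA0 hM0 ha hA hxt hyg_mem hx_mem hx_min hMsucc hy
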